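/- arXiv:2102.05163 — 2 statements merged into one kernel-verified Lean document; each statement's English description precedes it below -/
import Mathlib

section
/- Let κ > 0, let X be a standard N-dimensional Gaussian vector, let 𝟏 be the all-ones vector in ℝ^N, and let 𝟏_k denote the vector whose first N - k coordinates are +1 and last k coordinates are -1. Then for all integers m with 0 < m ≤ εN (ε sufficiently small depending on κ), P(|⟨𝟏,X⟩| ≤ κ√N) - P(|⟨𝟏,X⟩| ≤ κ√N and |⟨𝟏_{m/2},X⟩| ≤ κ√N) ≥ c√(m/N) for a constant c > 0 depending only on κ. -/
/-!
Put `k = m / 2` and split `X` into the sums `V` of its first `N - k` and `U` of its last `k`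
coordinates: independent centred Gaussians of variances `N - k` and `k`, with `⟨𝟏, X⟩ = V + U`
and `⟨𝟏_k, X⟩ = V - U`. When `V` lies in the window `[-κ√N, -κ√N + √k/2]` and `U` in
`[√k, 2√k]`, the first constraint holds and the second fails. The Gaussian densities are bounded
below on these windows, so their probabilities are at least of order `√k/√N` and a constant,
which gives the bound `c √(m/N)`.
-/

open MeasureTheory Set

noncomputable section

/-- Standard `N`-dimensional Gaussian measure. -/
def stdGaussianVec (N : ℕ) : Measure (Fin N → ℝ) :=
  Measure.pi fun _ => ProbabilityTheory.gaussianReal 0 1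

/-- The vector whose first `N - k` coordinates are `+1` and last `k` coordinates are `-1`. -/
def oneFlip (N k : ℕ) : Fin N → ℝ := fun i => if (i : ℕ) < N - k then 1 else -1

open ProbabilityTheory Real

open scoped NNReal

lemma map_sum_pi_gaussianReal {ι : Type*} [Fintype ι] (μ : ι → ℝ) (v : ι → ℝ≥0) :
    (Measure.pi fun i => gaussianReal (μ i) (v i)).map (fun x => ∑ i, x i)
      = gaussianReal (∑ i, μ i) (∑ i, v i) := by
  refine Measure.ext_of_charFun ?_
  ext t
  simp_rw [charFun_map_sum_pi_eq_prod, Finset.prod_apply, charFun_gaussianReal, ← Complex.exp_sum]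
  push_cast
  simp only [Finset.sum_mul, Finset.mul_sum, Finset.sum_div, Finset.sum_sub_distrib]

lemma map_sum_subtype_prod_gaussianReal {ι : Type*} [Fintype ι] (p : ι → Prop) [DecidablePred p]
    (μ : ι → ℝ) (v : ι → ℝ≥0) :
    (Measure.pi fun i => gaussianReal (μ i) (v i)).map
        (fun x => (∑ i : {i // p i}, x i, ∑ i : {i // ¬p i}, x i))
      = (gaussianReal (∑ i : {i // p i}, μ i) (∑ i : {i // p i}, v i)).prod
          (gaussianReal (∑ i : {i // ¬p i}, μ i) (∑ i : {i // ¬p i}, v i)) := by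
  have hsplit := measurePreserving_piEquivPiSubtypeProd (fun i => gaussianReal (μ i) (v i)) p
  have hcomp : (fun x : ι → ℝ => (∑ i : {i // p i}, x i, ∑ i : {i // ¬p i}, x i))
      = Prod.map (fun x : {i // p i} → ℝ => ∑ i, x i) (fun x : {i // ¬p i} → ℝ => ∑ i, x i) ∘
          MeasurableEquiv.piEquivPiSubtypeProd (fun _ => ℝ) p := rfl
  rw [hcomp, ← Measure.map_map (by fun_prop) (MeasurableEquiv.measurable _), hsplit.map_eq,
    ← Measure.map_prod_map _ _ (by fun_prop) (by fun_prop), map_sum_pi_gaussianReal,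
    map_sum_pi_gaussianReal]

lemma mul_exp_div_le_gaussianReal_Icc (μ : ℝ) {v : ℝ≥0} (hv : v ≠ 0) {b L D : ℝ} (hL : 0 ≤ L)
    (hD : ∀ x ∈ Icc b (b + L), (x - μ) ^ 2 / (2 * v) ≤ D) :
    L * exp (-D) / √(2 * π * v) ≤ (gaussianReal μ v).real (Icc b (b + L)) := by
  rw [measureReal_def, gaussianReal_apply_eq_integral μ hv, ENNReal.toReal_ofReal
    (setIntegral_nonneg measurableSet_Icc fun x _ => gaussianPDFReal_nonneg _ _ _)]
  have hpdf : ∀ x ∈ Icc b (b + L), exp (-D) / √(2 * π * v) ≤ gaussianPDFReal μ v x := by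
    intro x hx
    rw [gaussianPDFReal, div_eq_inv_mul, neg_div]
    gcongr
    exact hD x hx
  calc L * exp (-D) / √(2 * π * v) = ∫ _ in Icc b (b + L), exp (-D) / √(2 * π * v) := by
        rw [setIntegral_const, Real.volume_real_Icc_of_le (by linarith), smul_eq_mul]
        ring
    _ ≤ ∫ x in Icc b (b + L), gaussianPDFReal μ v x :=
        setIntegral_mono_on (integrableOn_const (by simp))
          (integrable_gaussianPDFReal μ v).integrableOn measurableSet_Icc hpdf

lemma exp_neg_two_div_le_gaussianReal_Icc_sqrt {v : ℝ≥0} (hv : v ≠ 0) :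
    exp (-2) / √(2 * π) ≤ (gaussianReal 0 v).real (Icc √v (√v + √v)) := by
  have hsv : 0 < √(v : ℝ) := sqrt_pos.2 (by positivity)
  convert mul_exp_div_le_gaussianReal_Icc 0 hv hsv.le (D := 2) ?_ using 1
  · rw [sqrt_mul (by positivity) (v : ℝ)]
    field_simp
  · intro x ⟨hx₁, hx₂⟩
    rw [sub_zero, div_le_iff₀ (by positivity)]
    nlinarith [sq_sqrt v.coe_nonneg]

lemma sum_oneFlip_mul (N k : ℕ) (X : Fin N → ℝ) :
    ∑ i, oneFlip N k i * X i
      = ∑ i : {i : Fin N // (i : ℕ) < N - k}, X i - ∑ i : {i : Fin N // ¬(i : ℕ) < N - k}, X i := by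
  rw [← Fintype.sum_subtype_add_sum_subtype (fun i : Fin N => (i : ℕ) < N - k), sub_eq_add_neg,
    ← Finset.sum_neg_distrib]
  congr 1 <;> refine Finset.sum_congr rfl fun i _ => ?_ <;> simp [oneFlip, i.2]

lemma abs_add_le_and_lt_abs_sub {a s v u : ℝ} (hs : 0 < s) (hsa : 2 * s ≤ a)
    (hv : v ∈ Icc (-a) (-a + s / 2)) (hu : u ∈ Icc s (s + s)) : |v + u| ≤ a ∧ a < |v - u| := by
  obtain ⟨hv₁, hv₂⟩ := hv
  obtain ⟨hu₁, hu₂⟩ := hu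
  exact ⟨abs_le.2 ⟨by linarith, by linarith⟩, lt_abs.2 (Or.inr (by linarith))⟩

instance (N : ℕ) : IsProbabilityMeasure (stdGaussianVec N) := by
  rw [stdGaussianVec]
  infer_instance

lemma map_sum_split_stdGaussianVec {N k : ℕ} (hkN : k ≤ N) :
    (stdGaussianVec N).map (fun X => (∑ i : {i : Fin N // (i : ℕ) < N - k}, X i,
        ∑ i : {i : Fin N // ¬(i : ℕ) < N - k}, X i))
      = (gaussianReal 0 (N - k : ℕ)).prod (gaussianReal 0 k) := by
  have hcard : Fintype.card {i : Fin N // (i : ℕ) < N - k} = N - k :=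
    Fintype.card_fin_lt_of_le (Nat.sub_le N k)
  rw [stdGaussianVec, map_sum_subtype_prod_gaussianReal]
  simp only [Finset.sum_const_zero, Finset.sum_const, Finset.card_univ, nsmul_one,
    Fintype.card_subtype_compl, hcard, Fintype.card_fin, Nat.sub_sub_self hkN]

lemma gaussianReal_windows_le_flip_gap {N k : ℕ} (hk : 0 < k) (hkN : k ≤ N) {a : ℝ}
    (hsa : 2 * √k ≤ a) :
    (gaussianReal 0 (N - k : ℕ)).real (Icc (-a) (-a + √k / 2)) *
        (gaussianReal 0 k).real (Icc √k (√k + √k))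
      ≤ (stdGaussianVec N).real {X | |∑ i, X i| ≤ a} -
        (stdGaussianVec N).real {X | |∑ i, X i| ≤ a ∧ |∑ i, oneFlip N k i * X i| ≤ a} := by
  rw [← measureReal_prod_prod, ← map_sum_split_stdGaussianVec hkN,
    map_measureReal_apply (by fun_prop) (measurableSet_Icc.prod measurableSet_Icc)]
  have hB : MeasurableSet {X : Fin N → ℝ | |∑ i, X i| ≤ a ∧ |∑ i, oneFlip N k i * X i| ≤ a} :=
    (measurableSet_le (f := fun X : Fin N → ℝ => |∑ i, X i|) (by fun_prop)
      measurable_const).inter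
    (measurableSet_le (f := fun X : Fin N → ℝ => |∑ i, oneFlip N k i * X i|) (by fun_prop)
      measurable_const)
  rw [← measureReal_sdiff (s₁ := {X | |∑ i, X i| ≤ a}) (fun X hX => hX.1) hB]
  refine measureReal_mono ?_
  rintro X ⟨hV, hU⟩
  obtain ⟨hsum, hflip⟩ := abs_add_le_and_lt_abs_sub (by positivity) hsa hV hU
  rw [Fintype.sum_subtype_add_sum_subtype] at hsum
  rw [← sum_oneFlip_mul] at hflip
  exact ⟨hsum, fun h => hflip.not_ge h.2⟩

lemma le_gaussianReal_Icc_near_neg_threshold {N k : ℕ} (hk : 0 < k) (hk2N : 2 * k ≤ N) {κ : ℝ}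
    (hsa : 2 * √k ≤ κ * √N) :
    √k / 2 * exp (-κ ^ 2) / √(2 * π * N)
      ≤ (gaussianReal 0 (N - k : ℕ)).real (Icc (-(κ * √N)) (-(κ * √N) + √k / 2)) := by
  have hvar : (((N - k : ℕ) : ℝ≥0) : ℝ) = N - k := by
    rw [NNReal.coe_natCast, Nat.cast_sub (by omega)]
  have hNk : (0 : ℝ) < N - k := by
    rw [← hvar, NNReal.coe_pos, Nat.cast_pos]
    omega
  have hk2N' : 2 * (k : ℝ) ≤ N := by exact_mod_cast hk2N
  calc √k / 2 * exp (-κ ^ 2) / √(2 * π * N)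
      ≤ √k / 2 * exp (-κ ^ 2) / √(2 * π * (((N - k : ℕ) : ℝ≥0) : ℝ)) := by
        rw [hvar]
        gcongr
        linarith
    _ ≤ _ := by
        refine mul_exp_div_le_gaussianReal_Icc 0 (Nat.cast_ne_zero.2 (by omega)) (by positivity) ?_
        rintro x ⟨hx₁, hx₂⟩
        have hx : x ^ 2 ≤ (κ * √N) ^ 2 := sq_le_sq' hx₁ (by linarith [sqrt_nonneg (k : ℝ)])
        rw [mul_pow, sq_sqrt (Nat.cast_nonneg N)] at hx
        rw [sub_zero, hvar, div_le_iff₀ (by positivity)]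
        nlinarith [sq_nonneg κ]

theorem stmt3 (κ : ℝ) (hκ : 0 < κ) :
    ∃ ε > (0:ℝ), ∃ c > (0:ℝ), ∀ N m : ℕ, 0 < m → Even m → (m : ℝ) ≤ ε * N →
      c * Real.sqrt ((m : ℝ) / N) ≤
        ((stdGaussianVec N) {X | |∑ i, X i| ≤ κ * Real.sqrt N}).toReal -
        ((stdGaussianVec N) {X | |∑ i, X i| ≤ κ * Real.sqrt N ∧
            |∑ i, oneFlip N (m / 2) i * X i| ≤ κ * Real.sqrt N}).toReal := by
  refine ⟨min 1 (κ ^ 2 / 2), by positivity, exp (-κ ^ 2 - 2) / (4 * π * √2), by positivity, ?_⟩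
  rintro N m hm ⟨k, rfl⟩ hmε
  rw [show (k + k) / 2 = k by omega]
  have hk : 0 < k := by omega
  have hk2N : 2 * k ≤ N := by
    have := hmε.trans (mul_le_of_le_one_left (Nat.cast_nonneg N) (min_le_left _ _))
    have : k + k ≤ N := by exact_mod_cast this
    omega
  have hsa : 2 * √k ≤ κ * √N := by
    have := hmε.trans (mul_le_mul_of_nonneg_right (min_le_right _ _) (Nat.cast_nonneg N))
    refine (pow_le_pow_iff_left₀ (by positivity) (by positivity) two_ne_zero).1 ?_
    rw [mul_pow, mul_pow, sq_sqrt (Nat.cast_nonneg _), sq_sqrt (Nat.cast_nonneg _)]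
    push_cast at this
    linarith
  have hN : (0 : ℝ) < N := by exact_mod_cast (by omega : 0 < N)
  calc exp (-κ ^ 2 - 2) / (4 * π * √2) * √(((k + k : ℕ) : ℝ) / N)
      = √k / 2 * exp (-κ ^ 2) / √(2 * π * N) * (exp (-2) / √(2 * π)) := by
        rw [Nat.cast_add, ← two_mul, sqrt_div' _ (Nat.cast_nonneg N), sqrt_mul zero_le_two,
          sqrt_mul (by positivity) (N : ℝ), sub_eq_add_neg, exp_add]
        field_simp
        rw [sq_sqrt (by positivity)]
        ring
    _ ≤ (gaussianReal 0 (N - k : ℕ)).real (Icc (-(κ * √N)) (-(κ * √N) + √k / 2)) *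
          (gaussianReal 0 k).real (Icc √k (√k + √k)) :=
        mul_le_mul (le_gaussianReal_Icc_near_neg_threshold hk hk2N hsa)
          (exp_neg_two_div_le_gaussianReal_Icc_sqrt (Nat.cast_ne_zero.2 (by omega))) (by positivity)
          measureReal_nonneg
    _ ≤ _ := gaussianReal_windows_le_flip_gap hk (by omega) hsa

end
end

section
/- Let A be a finite nonempty set, let B ⊆ A, and let (σ_i)_{i≥1} be i.i.d. uniform random elements of A. Let R ⊆ A × A be a symmetric relation and set δ = P((σ₁,σ₂) ∈ R) and q = P(σ₁ ∉ B). Define E_k to be the event that σ_i ∉ B for all 1 ≤ i ≤ k and (σ_i, σ_j) ∉ R for all 1 ≤ i < j ≤ k. Then for all integers k with 1 ≤ k ≤ q²/(4δ), P(E_k) ≥ (q - 2kδ/q)^k. -/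
/-! Write `N = #A` and `T_k` for the `k`-tuples of `A \ B` whose entries are pairwise unrelated, so
that `P(E_k) = #T_k / N ^ k =: p_k`. A pair `(x, a) ∈ T_{k+1} × (A \ B)` either extends `x` to a
tuple of `T_{k+2}`, or `a` is related to some `x i`, and then deleting `x i` leaves a tuple of
`T_k`; hence `p_{k+2} ≥ q p_{k+1} - (k+1) δ p_k`. As long as `4kδ ≤ q²`, induction on this
recurrence gives `p_{k+1} ≥ (q - 2kδ/q) p_k ≥ (q/2) p_k`, and multiplying these ratios gives the
bound. -/

open MeasureTheory

section

open Finset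
open scoped ENNReal

variable {α : Type*}

section IndepTuples

variable (S : Finset α) (R : α → α → Prop)

open scoped Classical in
noncomputable def indepTuples (k : ℕ) : Finset (Fin k → α) :=
  {x ∈ Fintype.piFinset fun _ => S | ∀ i j, i ≠ j → ¬ R (x i) (x j)}

open scoped Classical in
noncomputable def relPairs : Finset (α × α) :=
  {p ∈ S ×ˢ S | R p.1 p.2}

variable {S R}

theorem mem_indepTuples {k : ℕ} {x : Fin k → α} :
    x ∈ indepTuples S R k ↔ (∀ i, x i ∈ S) ∧ ∀ i j, i ≠ j → ¬ R (x i) (x j) := by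
  simp [indepTuples]

theorem cons_mem_indepTuples (hR : Symmetric R) {k : ℕ} {a : α} {x : Fin k → α}
    (ha : a ∈ S) (hx : x ∈ indepTuples S R k) (hxa : ∀ i, ¬ R (x i) a) :
    Fin.cons a x ∈ indepTuples S R (k + 1) := by
  rw [mem_indepTuples] at hx ⊢
  refine ⟨Fin.cases ha hx.1, Fin.cases (Fin.cases (by simp) fun j _ => fun h => hxa j (hR h)) ?_⟩
  intro i
  exact Fin.cases (fun _ => hxa i) fun j hij => hx.2 i j (fun h => hij (by rw [h]))

theorem removeNth_mem_indepTuples {k : ℕ} {x : Fin (k + 1) → α}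
    (hx : x ∈ indepTuples S R (k + 1)) (i : Fin (k + 1)) : i.removeNth x ∈ indepTuples S R k := by
  rw [mem_indepTuples] at hx ⊢
  exact ⟨fun j => hx.1 _, fun j j' hjj' => hx.2 _ _ (Fin.succAbove_right_injective.ne hjj')⟩

theorem card_indepTuples_zero : #(indepTuples S R 0) = 1 := by
  rw [card_eq_one]
  exact ⟨Fin.elim0, eq_singleton_iff_unique_mem.2
    ⟨mem_indepTuples.2 ⟨fun i => i.elim0, fun i => i.elim0⟩, fun _ _ => funext fun i => i.elim0⟩⟩

theorem card_le_card_indepTuples_one : #S ≤ #(indepTuples S R 1) := by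
  refine card_le_card_of_injOn (fun a _ => a) (fun a ha => ?_) fun a _ b _ h => congrFun h 0
  exact mem_indepTuples.2 ⟨fun _ => ha, fun i j hij => absurd (Subsingleton.elim i j) hij⟩

open scoped Classical in
theorem card_filter_rel_apply_le {k : ℕ} (i : Fin (k + 1)) :
    #{p ∈ indepTuples S R (k + 1) ×ˢ S | R (p.1 i) p.2} ≤
      #(relPairs S R) * #(indepTuples S R k) := by
  rw [← card_product]
  refine card_le_card_of_injOn (fun p => ((p.1 i, p.2), i.removeNth p.1)) ?_ ?_
  · intro p hp
    simp only [coe_filter, mem_product, Set.mem_ofPred_eq] at hp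
    obtain ⟨⟨hx, ha⟩, hR⟩ := hp
    simp only [coe_product, Set.mem_prod, mem_coe, relPairs, mem_filter, mem_product]
    exact ⟨⟨⟨(mem_indepTuples.1 hx).1 i, ha⟩, hR⟩, removeNth_mem_indepTuples hx i⟩
  · rintro ⟨x, a⟩ - ⟨y, b⟩ - h
    simp only [Prod.mk.injEq] at h
    obtain ⟨⟨hxy, rfl⟩, hrem⟩ := h
    rw [← i.insertNth_self_removeNth x, ← i.insertNth_self_removeNth y, hxy, hrem]

open scoped Classical in
theorem card_mul_card_indepTuples_le (hR : Symmetric R) (k : ℕ) :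
    #S * #(indepTuples S R (k + 1)) ≤
      #(indepTuples S R (k + 2)) + (k + 1) * #(relPairs S R) * #(indepTuples S R k) := by
  have hcover : indepTuples S R (k + 1) ×ˢ S ⊆
      (indepTuples S R (k + 2)).image (fun y => (Fin.tail y, y 0)) ∪
        univ.biUnion fun i => {p ∈ indepTuples S R (k + 1) ×ˢ S | R (p.1 i) p.2} := by
    rintro ⟨x, a⟩ hxa
    rw [mem_product] at hxa
    by_cases h : ∃ i, R (x i) a
    · obtain ⟨i, hi⟩ := h
      exact mem_union_right _
        (mem_biUnion.2 ⟨i, mem_univ _, mem_filter.2 ⟨mem_product.2 hxa, hi⟩⟩)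
    · simp only [not_exists] at h
      exact mem_union_left _ (mem_image.2
        ⟨Fin.cons a x, cons_mem_indepTuples hR hxa.2 hxa.1 h, by simp⟩)
  calc #S * #(indepTuples S R (k + 1))
      = #(indepTuples S R (k + 1) ×ˢ S) := by rw [card_product, mul_comm]
    _ ≤ #(indepTuples S R (k + 2)) +
          ∑ i : Fin (k + 1), #{p ∈ indepTuples S R (k + 1) ×ˢ S | R (p.1 i) p.2} :=
        (card_le_card hcover).trans <| (card_union_le _ _).trans <|
          add_le_add card_image_le card_biUnion_le
    _ ≤ #(indepTuples S R (k + 2)) + (k + 1) * #(relPairs S R) * #(indepTuples S R k) := by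
        grw [sum_le_sum fun i _ => card_filter_rel_apply_le i]
        simp [mul_assoc]

open scoped Classical in
theorem indepTuples_density_recurrence (hR : Symmetric R) {A : Finset α} (hSA : S ⊆ A)
    (j : ℕ) :
    (#S / #A : ℝ) * (#(indepTuples S R (j + 1)) / #A ^ (j + 1)) -
        (j + 1) * (#(relPairs A R) / #A ^ 2) * (#(indepTuples S R j) / #A ^ j) ≤
      #(indepTuples S R (j + 2)) / #A ^ (j + 2) := by
  have hrel : #(relPairs S R) ≤ #(relPairs A R) :=
    card_le_card (filter_subset_filter _ (product_subset_product hSA hSA))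
  have hcount : (#S * #(indepTuples S R (j + 1)) : ℝ) ≤
      #(indepTuples S R (j + 2)) + (j + 1) * #(relPairs A R) * #(indepTuples S R j) :=
    calc (#S * #(indepTuples S R (j + 1)) : ℝ)
        ≤ #(indepTuples S R (j + 2)) + (j + 1) * #(relPairs S R) * #(indepTuples S R j) := by
          exact_mod_cast card_mul_card_indepTuples_le hR j
      _ ≤ _ := by gcongr
  calc _ = ((#S * #(indepTuples S R (j + 1)) : ℝ) -
          (j + 1) * #(relPairs A R) * #(indepTuples S R j)) / #A ^ (j + 2) := by ring
    _ ≤ _ := by gcongr; linarith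

end IndepTuples

section Recurrence

variable {p : ℕ → ℝ} {q δ : ℝ}

theorem ratio_lower_bound_of_recurrence (hq : 0 < q) (hδ : 0 ≤ δ) (hp : ∀ j, 0 ≤ p j)
    (h1 : q * p 0 ≤ p 1) (hrec : ∀ j : ℕ, q * p (j + 1) - (j + 1) * δ * p j ≤ p (j + 2)) :
    ∀ j : ℕ, 4 * j * δ ≤ q ^ 2 → (q - 2 * j * δ / q) * p j ≤ p (j + 1) := by
  intro j
  induction j with
  | zero => exact fun _ => by simpa using h1
  | succ j ih =>
    intro hj
    push_cast at hj ⊢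
    have hhalf : q / 2 * p j ≤ p (j + 1) := by
      refine le_trans ?_ (ih (by linarith))
      gcongr
      · exact hp j
      · rw [le_sub_comm, div_le_iff₀ hq]
        linarith
    calc (q - 2 * (j + 1) * δ / q) * p (j + 1)
        = q * p (j + 1) - (j + 1) * δ * (2 / q * p (j + 1)) := by field_simp
      _ ≤ q * p (j + 1) - (j + 1) * δ * p j := by
        gcongr
        rw [div_mul_eq_mul_div, le_div_iff₀ hq]
        linarith
      _ ≤ p (j + 1 + 1) := hrec j

theorem pow_le_of_recurrence (hq : 0 < q) (hδ : 0 ≤ δ) (hp : ∀ j, 0 ≤ p j) (h0 : p 0 = 1)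
    (h1 : q ≤ p 1) (hrec : ∀ j : ℕ, q * p (j + 1) - (j + 1) * δ * p j ≤ p (j + 2))
    {k : ℕ} (hk : 4 * k * δ ≤ q ^ 2) : (q - 2 * k * δ / q) ^ k ≤ p k := by
  have hc : 0 ≤ q - 2 * k * δ / q := by
    rw [sub_nonneg, div_le_iff₀ hq]
    nlinarith
  have : ∀ j ≤ k, (q - 2 * k * δ / q) ^ j ≤ p j := by
    intro j
    induction j with
    | zero => simp [h0]
    | succ j ih =>
      intro hjk
      have hj : (j : ℝ) ≤ k := by exact_mod_cast Nat.le_of_succ_le hjk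
      calc (q - 2 * k * δ / q) ^ (j + 1) = (q - 2 * k * δ / q) * (q - 2 * k * δ / q) ^ j :=
            pow_succ' _ _
        _ ≤ (q - 2 * j * δ / q) * p j := by
          gcongr
          exacts [hc.trans (by gcongr), ih (Nat.le_of_succ_le hjk)]
        _ ≤ p (j + 1) :=
          ratio_lower_bound_of_recurrence hq hδ hp (by rwa [h0, mul_one]) hrec j (by nlinarith)
  exact this k le_rfl

end Recurrence

theorem measure_eq_card_mul_of_inter_eq {β : Type*} [MeasurableSpace β]
    [MeasurableSingletonClass β] {ν : Measure β} [IsProbabilityMeasure ν] {S F : Finset β}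
    {c : ℝ≥0∞} (hS : ν S = 1) (hν : ∀ x ∈ S, ν {x} = c) {t : Set β} (htF : t ∩ S = F) :
    ν t = #F * c := by
  have hFS : F ⊆ S := by
    rw [← coe_subset, ← htF]
    exact Set.inter_subset_right
  rw [← measure_inter_conull ((prob_compl_eq_zero_iff S.measurableSet).2 hS), htF,
    ← sum_measure_singleton, sum_congr rfl fun x hx => hν x (hFS hx), sum_const, nsmul_eq_mul]

section Uniform

variable [MeasurableSpace α] [MeasurableSingletonClass α] {A : Finset α}
  (hA : A.Nonempty)

theorem uniformOfFinset_toMeasure_singleton {a : α} (ha : a ∈ A) :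
    (PMF.uniformOfFinset A hA).toMeasure {a} = (#A : ℝ≥0∞)⁻¹ := by
  rw [PMF.toMeasure_apply_singleton _ _ (measurableSet_singleton a), PMF.uniformOfFinset_apply,
    if_pos ha]

theorem uniformOfFinset_toMeasure_self : (PMF.uniformOfFinset A hA).toMeasure A = 1 :=
  (PMF.toMeasure_apply_eq_one_iff _ A.measurableSet).2 (PMF.support_uniformOfFinset hA).le

theorem toReal_natCast_mul_inv_pow (m n d : ℕ) :
    ((m : ℝ≥0∞) * (n : ℝ≥0∞)⁻¹ ^ d).toReal = m / n ^ d := by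
  simp [div_eq_mul_inv]

theorem toReal_uniformOfFinset_toMeasure_apply {t : Set α} {F : Finset α} (htF : t ∩ A = F) :
    ((PMF.uniformOfFinset A hA).toMeasure t).toReal = #F / #A := by
  rw [measure_eq_card_mul_of_inter_eq (uniformOfFinset_toMeasure_self hA)
    (fun _ => uniformOfFinset_toMeasure_singleton hA) htF]
  simpa using toReal_natCast_mul_inv_pow #F #A 1

theorem toReal_uniformOfFinset_prod_apply {t : Set (α × α)} {F : Finset (α × α)}
    (htF : t ∩ ↑(A ×ˢ A) = F) :
    (((PMF.uniformOfFinset A hA).toMeasure.prod (PMF.uniformOfFinset A hA).toMeasure) t).toReal =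
      #F / #A ^ 2 := by
  rw [measure_eq_card_mul_of_inter_eq (c := (#A : ℝ≥0∞)⁻¹ ^ 2) _ _ htF, toReal_natCast_mul_inv_pow]
  · rw [coe_product, Measure.prod_prod, uniformOfFinset_toMeasure_self, one_mul]
  · rintro ⟨a, b⟩ hab
    rw [mem_product] at hab
    rw [← Set.singleton_prod_singleton, Measure.prod_prod,
      uniformOfFinset_toMeasure_singleton hA hab.1,
      uniformOfFinset_toMeasure_singleton hA hab.2, sq]

theorem toReal_uniformOfFinset_pi_apply {ι : Type*} [Fintype ι] [DecidableEq ι]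
    {t : Set (ι → α)} {F : Finset (ι → α)} (htF : t ∩ ↑(Fintype.piFinset fun _ : ι => A) = F) :
    ((Measure.pi fun _ : ι => (PMF.uniformOfFinset A hA).toMeasure) t).toReal =
      #F / #A ^ Fintype.card ι := by
  rw [measure_eq_card_mul_of_inter_eq (c := (#A : ℝ≥0∞)⁻¹ ^ Fintype.card ι) _ _ htF,
    toReal_natCast_mul_inv_pow]
  · rw [Fintype.coe_piFinset, Measure.pi_pi]
    simp only [uniformOfFinset_toMeasure_self, Finset.prod_const_one]
  · intro x hx
    rw [Fintype.mem_piFinset] at hx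
    rw [← Set.univ_pi_singleton, Measure.pi_pi]
    simp [uniformOfFinset_toMeasure_singleton hA (hx _)]

end Uniform

end

theorem stmt6_general {α : Type*} [MeasurableSpace α] [MeasurableSingletonClass α]
    (A : Finset α) (hA : A.Nonempty) (B : Finset α)
    (R : α → α → Prop) (hR : Symmetric R) :
    ∀ (μ : Measure α), μ = (PMF.uniformOfFinset A hA).toMeasure →
    ∀ (δ q : ℝ), δ = ((μ.prod μ) {p : α × α | R p.1 p.2}).toReal →
      q = (μ {a | a ∉ B}).toReal → 0 < δ →
    ∀ k : ℕ, 1 ≤ k → (k : ℝ) ≤ q ^ 2 / (4 * δ) →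
      (q - 2 * k * δ / q) ^ k ≤
        ((Measure.pi fun _ : Fin k => μ)
          {x : Fin k → α | (∀ i, x i ∉ B) ∧ ∀ i j, i ≠ j → ¬ R (x i) (x j)}).toReal := by
  classical
  rintro μ rfl δ q hδ hq hδ_pos k hk hkq
  rw [toReal_uniformOfFinset_prod_apply hA (F := relPairs A R)
    (by ext; simp [relPairs, and_comm])] at hδ
  rw [toReal_uniformOfFinset_toMeasure_apply hA (F := A \ B) (by ext; simp [and_comm])] at hq
  rw [toReal_uniformOfFinset_pi_apply hA (F := indepTuples (A \ B) R k)
    (by ext; simp [mem_indepTuples]; grind), Fintype.card_fin]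
  have h4kδ : 4 * k * δ ≤ q ^ 2 := by
    rw [le_div_iff₀ (by positivity)] at hkq
    linarith
  have hq_pos : 0 < q := by
    have hk_one : (1 : ℝ) ≤ k := by exact_mod_cast hk
    have hq_nonneg : 0 ≤ q := by rw [hq]; positivity
    nlinarith
  refine pow_le_of_recurrence (p := fun j => (indepTuples (A \ B) R j).card / A.card ^ j)
    hq_pos hδ_pos.le (fun j => by positivity) (by simp [card_indepTuples_zero]) ?_ ?_ h4kδ
  · rw [hq, pow_one]
    gcongr
    exact_mod_cast card_le_card_indepTuples_one
  · intro j
    rw [hq, hδ]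
    exact indepTuples_density_recurrence hR Finset.sdiff_subset j

theorem stmt6 {α : Type*} [MeasurableSpace α] [MeasurableSingletonClass α]
    (A : Finset α) (hA : A.Nonempty) (B : Finset α) (hB : B ⊆ A)
    (R : α → α → Prop) (hR : Symmetric R) :
    ∀ (μ : Measure α), μ = (PMF.uniformOfFinset A hA).toMeasure →
    ∀ (δ q : ℝ), δ = ((μ.prod μ) {p : α × α | R p.1 p.2}).toReal →
      q = (μ {a | a ∉ B}).toReal → 0 < δ →
    ∀ k : ℕ, 1 ≤ k → (k : ℝ) ≤ q ^ 2 / (4 * δ) →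
      (q - 2 * k * δ / q) ^ k ≤
        ((Measure.pi fun _ : Fin k => μ)
          {x : Fin k → α | (∀ i, x i ∉ B) ∧ ∀ i j, i ≠ j → ¬ R (x i) (x j)}).toReal :=
  stmt6_general A hA B R hR
end
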